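/- arXiv:2307.00401 — 2 statements merged into one kernel-verified Lean document; each statement's English description precedes it below -/
import Mathlib

section
/- Let G be a group of graph automorphisms of a Helly graph X. The following are equivalent: (1) G stabilizes a round clique of X (there is a round clique σ with g·σ = σ for all g ∈ G); (2) G fixes a point of the injective hull E(X) (there is f ∈ E(X) with g·f = f for all g ∈ G); (3) G has a bounded orbit in X (there are a vertex x and R ≥ 0 with d(x, g·x) ≤ R for all g ∈ G). -/
/-!
A vertex of an invariant clique moves by at most 1, and an invariant extremal function `f` gives
`d(x, γx) ≤ f x + f (γx) = 2 f x`; so (1) and (2) each imply (3).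

For (3) ⇒ (2), `x ↦ sup_γ d(x, γ x₀)` is finite, admissible (`d(x,y) ≤ f x + f y`) and
`Γ`-invariant. With `f*(x) = sup_y (d(x,y) - f y) ≤ f x`, the map `f ↦ (f + f*) / 2` preserves
admissibility and invariance, so its iterates decrease to an invariant admissible limit `e`;
since `e` lies below every iterate, `e* ≥ lim (2 f_{n+1} - f_n) = e`, i.e. `e` is extremal.

For (2) ⇒ (1), the balls `B(x, ⌈f x⌉)` pairwise intersect because `d(x,y) ≤ f x + f y`, so by the
Helly property their intersection `phi G f` is nonempty. Extremality gives `f ≤ 1` on it, hence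
any two of its points are at distance `< 2`, and it is `Γ`-invariant because `f` is.
-/

namespace HellyPaper

variable {V : Type*}

/-- The combinatorial ball of radius `r` around `x` in the graph `G`. -/
def ball (G : SimpleGraph V) (x : V) (r : ℕ) : Set V := {y | G.dist x y ≤ r}

/-- A Helly graph: a connected graph in which every family of pairwise
intersecting combinatorial balls has nonempty global intersection. -/
def IsHellyGraph (G : SimpleGraph V) : Prop :=
  G.Connected ∧ ∀ S : Set (V × ℕ),
    (∀ p ∈ S, ∀ q ∈ S, (ball G p.1 p.2 ∩ ball G q.1 q.2).Nonempty) →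
    (⋂ p ∈ S, ball G p.1 p.2).Nonempty

/-- A round clique: a nonempty clique which is an intersection of a family of
combinatorial balls. -/
def IsRoundClique (G : SimpleGraph V) (σ : Set V) : Prop :=
  σ.Nonempty ∧ G.IsClique σ ∧ ∃ S : Set (V × ℕ), σ = ⋂ p ∈ S, ball G p.1 p.2

/-- Every strictly increasing chain of round cliques σ₀ ⊊ σ₁ ⊊ ⋯ ⊊ σ_k has k ≤ N
(combinatorial dimension at most N, following Corollary C of the paper). -/
def DimAtMost (G : SimpleGraph V) (N : ℕ) : Prop :=
  ∀ (k : ℕ) (c : Fin (k + 1) → Set V),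
    (∀ i, IsRoundClique G (c i)) → StrictMono c → k ≤ N

/-- The injective hull of `G`, realized as the set of extremal functions. -/
def InjHull (G : SimpleGraph V) : Set (V → ℝ) :=
  {f | (∀ x y : V, (G.dist x y : ℝ) ≤ f x + f y) ∧
    ∀ x : V, IsLUB (Set.range fun y => (G.dist x y : ℝ) - f y) (f x)}

/-- The sup metric d∞ on the injective hull. -/
noncomputable def supDist (f g : V → ℝ) : ℝ := ⨆ x, |f x - g x|

/-- The isometric action of a graph automorphism on the injective hull:
(g·f)(x) = f(g⁻¹·x). -/
def hullAct (g : Equiv.Perm V) (f : V → ℝ) : V → ℝ := fun x => f (g⁻¹ x)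

/-- A permutation of the vertices is a graph automorphism if it preserves adjacency. -/
def IsGraphAut (G : SimpleGraph V) (g : Equiv.Perm V) : Prop :=
  ∀ x y, G.Adj (g x) (g y) ↔ G.Adj x y

/-- The round clique associated to a point of the injective hull:
φ(p) = ⋂_{x ∈ X} B(x, ⌈p(x)⌉). -/
def phi (G : SimpleGraph V) (p : V → ℝ) : Set V :=
  {z | ∀ x : V, (G.dist x z : ℝ) ≤ (⌈p x⌉ : ℝ)}

/-- The values of `p` all lie in (1/2)ℕ. -/
def halfInt (p : V → ℝ) : Prop := ∀ x, ∃ k : ℕ, p x = (k : ℝ) / 2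

end HellyPaper

namespace SimpleGraph

variable {V W : Type*} {G : SimpleGraph V} {H : SimpleGraph W} {u v : V}

theorem Hom.dist_map_le (f : G →g H) (h : G.Reachable u v) : H.dist (f u) (f v) ≤ G.dist u v := by
  obtain ⟨p, hp⟩ := h.exists_walk_length_eq_dist
  simpa [hp] using dist_le (p.map f)

theorem Iso.dist_map (e : G ≃g H) (u v : V) : H.dist (e u) (e v) = G.dist u v := by
  by_cases h : G.Reachable u v
  · refine le_antisymm (e.toHom.dist_map_le h) ?_
    simpa using e.symm.toHom.dist_map_le (u := e u) (v := e v) (Iso.reachable_iff.2 h)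
  · rw [dist_eq_zero_of_not_reachable h, dist_eq_zero_of_not_reachable (mt Iso.reachable_iff.1 h)]

theorem Reachable.exists_dist_le_dist_le (h : G.Reachable u v) {a b : ℕ}
    (hab : G.dist u v ≤ a + b) : ∃ w, G.dist u w ≤ a ∧ G.dist w v ≤ b := by
  obtain ⟨p, hp⟩ := h.exists_walk_length_eq_dist
  refine ⟨p.getVert a, ?_, ?_⟩
  · simpa using (dist_le (p.take a)).trans (by simp)
  · have := dist_le (p.drop a)
    rw [Walk.drop_length] at this
    omega

theorem IsClique.dist_le_one {s : Set V} (hs : G.IsClique s) (hu : u ∈ s) (hv : v ∈ s) :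
    G.dist u v ≤ 1 := by
  rcases eq_or_ne u v with rfl | huv
  · simp
  · exact (dist_eq_one_iff_adj.2 (hs hu hv huv)).le

end SimpleGraph

namespace HellyPaper

open SimpleGraph Filter Topology

section

variable {V : Type*} {G : SimpleGraph V}

theorem IsGraphAut.dist_apply {g : Equiv.Perm V} (hg : IsGraphAut G g) (x y : V) :
    G.dist (g x) (g y) = G.dist x y :=
  Iso.dist_map ⟨g, hg _ _⟩ x y

theorem hullAct_eq_self_iff {g : Equiv.Perm V} {f : V → ℝ} :
    hullAct g f = f ↔ ∀ x, f (g x) = f x := by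
  refine ⟨fun h x => ?_, fun h => funext fun x => ?_⟩
  · simpa [hullAct] using (congrFun h (g x)).symm
  · simpa [hullAct] using (h (g⁻¹ x)).symm

theorem IsHellyGraph.exists_forall_dist_le (hH : IsHellyGraph G) (r : V → ℕ)
    (hr : ∀ x y, G.dist x y ≤ r x + r y) : ∃ z, ∀ x, G.dist x z ≤ r x := by
  obtain ⟨z, hz⟩ := hH.2 (Set.range fun x => (x, r x)) <| by
    rintro _ ⟨x, rfl⟩ _ ⟨y, rfl⟩
    obtain ⟨z, hxz, hzy⟩ := (hH.1.preconnected x y).exists_dist_le_dist_le (hr x y)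
    exact ⟨z, hxz, show G.dist y z ≤ r y by rwa [dist_comm]⟩
  simp only [Set.mem_iInter, Set.mem_range, forall_exists_index] at hz
  exact ⟨z, fun x => hz _ x rfl⟩

section Admissible

variable {f g : V → ℝ}

def IsAdmissible (G : SimpleGraph V) (f : V → ℝ) : Prop :=
  ∀ x y, (G.dist x y : ℝ) ≤ f x + f y

/-- The function `f*` of Isbell and Dress. -/
noncomputable def conjugate (G : SimpleGraph V) (f : V → ℝ) : V → ℝ :=
  fun x => ⨆ y, (G.dist x y : ℝ) - f y

noncomputable def averageWithConjugate (G : SimpleGraph V) (f : V → ℝ) : V → ℝ :=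
  fun x => (f x + conjugate G f x) / 2

theorem isAdmissible_of_mem_injHull (hf : f ∈ InjHull G) : IsAdmissible G f := hf.1

theorem IsAdmissible.nonneg (hf : IsAdmissible G f) (x : V) : 0 ≤ f x := by
  simpa using hf x x

theorem IsAdmissible.bddAbove (hf : IsAdmissible G f) (x : V) :
    BddAbove (Set.range fun y => (G.dist x y : ℝ) - f y) :=
  ⟨f x, by rintro _ ⟨y, rfl⟩; linarith [hf x y]⟩

theorem IsAdmissible.le_conjugate (hf : IsAdmissible G f) (x y : V) :
    (G.dist x y : ℝ) - f y ≤ conjugate G f x :=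
  le_ciSup (hf.bddAbove x) y

theorem IsAdmissible.conjugate_le (hf : IsAdmissible G f) (x : V) : conjugate G f x ≤ f x :=
  have : Nonempty V := ⟨x⟩
  ciSup_le fun y => by linarith [hf x y]

theorem IsAdmissible.conjugate_anti (hf : IsAdmissible G f) (hfg : f ≤ g) (x : V) :
    conjugate G g x ≤ conjugate G f x :=
  have : Nonempty V := ⟨x⟩
  ciSup_le fun y => by linarith [hf.le_conjugate x y, hfg y]

theorem IsAdmissible.mem_injHull (hf : IsAdmissible G f) (h : ∀ x, f x ≤ conjugate G f x) :
    f ∈ InjHull G := by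
  refine ⟨hf, fun x => ⟨?_, fun b hb => ?_⟩⟩
  · rintro _ ⟨y, rfl⟩
    linarith [hf x y]
  · have : Nonempty V := ⟨x⟩
    exact (h x).trans (ciSup_le fun y => hb ⟨y, rfl⟩)

theorem isAdmissible_averageWithConjugate (hf : IsAdmissible G f) :
    IsAdmissible G (averageWithConjugate G f) := fun x y => by
  have hxy := hf.le_conjugate x y
  have hyx := hf.le_conjugate y x
  rw [dist_comm] at hyx
  simp only [averageWithConjugate]
  linarith

theorem IsAdmissible.of_tendsto {ι : Type*} {l : Filter ι} [l.NeBot] {F : ι → V → ℝ}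
    (hF : ∀ i, IsAdmissible G (F i)) (hlim : ∀ x, Tendsto (fun i => F i x) l (𝓝 (f x))) :
    IsAdmissible G f := fun x y =>
  ge_of_tendsto ((hlim x).add (hlim y)) (Eventually.of_forall fun i => hF i x y)

variable {a : Equiv.Perm V}

theorem conjugate_apply_of_isGraphAut (ha : IsGraphAut G a) (hfa : ∀ x, f (a x) = f x) (x : V) :
    conjugate G f (a x) = conjugate G f x := by
  rw [conjugate, ← a.iSup_comp]
  simp only [ha.dist_apply, hfa]
  rfl

theorem averageWithConjugate_apply_of_isGraphAut (ha : IsGraphAut G a)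
    (hfa : ∀ x, f (a x) = f x) (x : V) :
    averageWithConjugate G f (a x) = averageWithConjugate G f x := by
  simp only [averageWithConjugate, hfa, conjugate_apply_of_isGraphAut ha hfa]

theorem IsAdmissible.iterate_averageWithConjugate (hf : IsAdmissible G f) (n : ℕ) :
    IsAdmissible G ((averageWithConjugate G)^[n] f) := by
  induction n with
  | zero => exact hf
  | succ n ih =>
    rw [Function.iterate_succ_apply']
    exact isAdmissible_averageWithConjugate ih

theorem iterate_averageWithConjugate_apply_of_isGraphAut (ha : IsGraphAut G a)
    (hfa : ∀ x, f (a x) = f x) (n : ℕ) (x : V) :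
    (averageWithConjugate G)^[n] f (a x) = (averageWithConjugate G)^[n] f x := by
  induction n generalizing x with
  | zero => exact hfa x
  | succ n ih =>
    simp only [Function.iterate_succ_apply']
    exact averageWithConjugate_apply_of_isGraphAut ha ih x

theorem IsAdmissible.exists_mem_injHull (hf : IsAdmissible G f) :
    ∃ e ∈ InjHull G, ∀ a : Equiv.Perm V, IsGraphAut G a → (∀ x, f (a x) = f x) →
      ∀ x, e (a x) = e x := by
  set F : ℕ → V → ℝ := fun n => (averageWithConjugate G)^[n] f
  have hF : ∀ n, IsAdmissible G (F n) := hf.iterate_averageWithConjugate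
  have hF_succ : ∀ n x, F (n + 1) x = (F n x + conjugate G (F n) x) / 2 := fun n x => by
    simp only [F, Function.iterate_succ_apply', averageWithConjugate]
  have hanti : ∀ x, Antitone fun n => F n x := fun x =>
    antitone_nat_of_succ_le fun n => by rw [hF_succ]; linarith [(hF n).conjugate_le x]
  have hbdd : ∀ x, BddBelow (Set.range fun n => F n x) := fun x =>
    ⟨0, by rintro _ ⟨n, rfl⟩; exact (hF n).nonneg x⟩
  set e : V → ℝ := fun x => ⨅ n, F n x
  have hlim : ∀ x, Tendsto (fun n => F n x) atTop (𝓝 (e x)) := fun x =>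
    tendsto_atTop_ciInf (hanti x) (hbdd x)
  have he : IsAdmissible G e := IsAdmissible.of_tendsto hF hlim
  refine ⟨e, he.mem_injHull fun x => ?_, fun a ha hfa x => ?_⟩
  · have hconj : Tendsto (fun n => conjugate G (F n) x) atTop (𝓝 (e x)) := by
      have := ((hlim x).comp (tendsto_add_atTop_nat 1)).const_mul 2 |>.sub (hlim x)
      refine (by ring_nf : 2 * e x - e x = e x) ▸ this.congr fun n => ?_
      simp only [Function.comp_apply, hF_succ]
      ring
    exact le_of_tendsto hconj <| Eventually.of_forall fun n =>
      he.conjugate_anti (fun y => ciInf_le (hbdd y) n) x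
  · exact iInf_congr fun n => iterate_averageWithConjugate_apply_of_isGraphAut ha hfa n x

end Admissible

section Phi

variable {f : V → ℝ} {z : V}

theorem natCast_le_ceil_iff {r : ℝ} (hr : 0 ≤ r) (n : ℕ) : (n : ℝ) ≤ (⌈r⌉ : ℝ) ↔ n ≤ ⌈r⌉₊ := by
  rw [← Int.ceil_toNat, Int.le_toNat (Int.ceil_nonneg hr)]
  exact_mod_cast Iff.rfl

theorem mem_phi_iff : z ∈ phi G f ↔ ∀ x, (G.dist x z : ℝ) < f x + 1 := by
  refine forall_congr' fun x => ?_
  rw [← sub_lt_iff_lt_add, ← Int.cast_natCast, Int.cast_le, ← Int.le_ceil_iff]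

theorem mem_phi_iff_of_nonneg (hf : ∀ x, 0 ≤ f x) : z ∈ phi G f ↔ ∀ x, G.dist x z ≤ ⌈f x⌉₊ :=
  forall_congr' fun x => natCast_le_ceil_iff (hf x) _

theorem phi_eq_iInter_ball (hf : ∀ x, 0 ≤ f x) :
    phi G f = ⋂ p ∈ Set.range fun x => (x, ⌈f x⌉₊), ball G p.1 p.2 := by
  ext z
  simp only [mem_phi_iff_of_nonneg hf, Set.mem_iInter, Set.mem_range, forall_exists_index]
  exact ⟨fun hz _ x hx => hx ▸ hz x, fun hz x => hz _ x rfl⟩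

theorem IsHellyGraph.phi_nonempty (hH : IsHellyGraph G) (hf : f ∈ InjHull G) :
    (phi G f).Nonempty := by
  obtain ⟨z, hz⟩ := hH.exists_forall_dist_le (fun x => ⌈f x⌉₊) fun x y => by
    exact_mod_cast (hf.1 x y).trans (add_le_add (Nat.le_ceil _) (Nat.le_ceil _))
  exact ⟨z, (mem_phi_iff_of_nonneg (isAdmissible_of_mem_injHull hf).nonneg).2 hz⟩

theorem isClique_phi (hc : G.Connected) (hf : f ∈ InjHull G) : G.IsClique (phi G f) := by
  intro z hz w hw hzw
  have hw_le : f w ≤ 1 := (hf.2 w).2 <| by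
    rintro _ ⟨y, rfl⟩
    have hyw := mem_phi_iff.1 hw y
    rw [SimpleGraph.dist_comm] at hyw
    exact sub_le_iff_le_add'.2 hyw.le
  have hlt : G.dist z w < 2 := by
    have := (mem_phi_iff.1 hz w).trans_le (by linarith : f w + 1 ≤ 2)
    rw [SimpleGraph.dist_comm] at this
    exact_mod_cast this
  have hpos := (hc.preconnected z w).pos_dist_of_ne hzw
  exact dist_eq_one_iff_adj.1 (by omega)

theorem IsHellyGraph.isRoundClique_phi (hH : IsHellyGraph G) (hf : f ∈ InjHull G) :
    IsRoundClique G (phi G f) :=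
  ⟨hH.phi_nonempty hf, isClique_phi hH.1 hf, _,
    phi_eq_iInter_ball (isAdmissible_of_mem_injHull hf).nonneg⟩

theorem IsGraphAut.image_phi {a : Equiv.Perm V} (ha : IsGraphAut G a)
    (hfa : ∀ x, f (a x) = f x) : a '' phi G f = phi G f := by
  have hpre : a ⁻¹' phi G f = phi G f := by
    ext z
    simp only [Set.mem_preimage, mem_phi_iff]
    rw [← a.forall_congr_right]
    simp only [ha.dist_apply, hfa]
  nth_rw 1 [← hpre]
  exact Set.image_preimage_eq _ a.surjective

end Phi

section Action

variable {Γ : Type*} [Group Γ] (φ : Γ →* Equiv.Perm V)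

theorem IsRoundClique.exists_dist_apply_le {σ : Set V} (hσ : IsRoundClique G σ)
    (hφσ : ∀ γ, φ γ '' σ = σ) : ∃ (x : V) (R : ℝ), ∀ γ, (G.dist x (φ γ x) : ℝ) ≤ R := by
  obtain ⟨x, hx⟩ := hσ.1
  refine ⟨x, 1, fun γ => ?_⟩
  have hγx : φ γ x ∈ σ := hφσ γ ▸ Set.mem_image_of_mem _ hx
  exact_mod_cast hσ.2.1.dist_le_one hx hγx

theorem exists_dist_apply_le_of_hullAct_eq [Nonempty V] {f : V → ℝ} (hf : f ∈ InjHull G)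
    (hfix : ∀ γ, hullAct (φ γ) f = f) : ∃ (x : V) (R : ℝ), ∀ γ, (G.dist x (φ γ x) : ℝ) ≤ R := by
  obtain ⟨x⟩ := ‹Nonempty V›
  exact ⟨x, 2 * f x, fun γ => by linarith [hf.1 x (φ γ x), hullAct_eq_self_iff.1 (hfix γ) x]⟩

theorem exists_mem_injHull_hullAct_eq (hc : G.Connected) (hφ : ∀ γ, IsGraphAut G (φ γ))
    {x₀ : V} {R : ℝ} (hR : ∀ γ, (G.dist x₀ (φ γ x₀) : ℝ) ≤ R) :
    ∃ f ∈ InjHull G, ∀ γ, hullAct (φ γ) f = f := by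
  set f : V → ℝ := fun x => ⨆ γ, (G.dist x (φ γ x₀) : ℝ)
  have hbdd : ∀ x, BddAbove (Set.range fun γ => (G.dist x (φ γ x₀) : ℝ)) := fun x => by
    refine ⟨G.dist x x₀ + R, ?_⟩
    rintro _ ⟨γ, rfl⟩
    have : (G.dist x (φ γ x₀) : ℝ) ≤ G.dist x x₀ + G.dist x₀ (φ γ x₀) := by
      exact_mod_cast hc.dist_triangle
    linarith [hR γ]
  have hle : ∀ x, (G.dist x x₀ : ℝ) ≤ f x := fun x => by simpa using le_ciSup (hbdd x) 1
  have hf : IsAdmissible G f := fun x y => by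
    have : (G.dist x y : ℝ) ≤ G.dist x x₀ + G.dist y x₀ := by
      have := hc.dist_triangle (u := x) (v := x₀) (w := y)
      rw [SimpleGraph.dist_comm (u := x₀)] at this
      exact_mod_cast this
    linarith [hle x, hle y]
  have hinv : ∀ γ x, f (φ γ x) = f x := fun γ x => by
    simp only [f]
    rw [← (Equiv.mulLeft γ).iSup_comp]
    simp [(hφ γ).dist_apply]
  obtain ⟨e, he, he_inv⟩ := hf.exists_mem_injHull
  exact ⟨e, he, fun γ => hullAct_eq_self_iff.2 (he_inv _ (hφ γ) (hinv γ))⟩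

end Action

end

/-- Characterizations of elliptic groups of automorphisms of a Helly graph:
stabilizing a round clique ↔ fixing a point of the injective hull ↔ having a
bounded orbit. -/
theorem stmt2 {V : Type*} {Γ : Type*} [Group Γ] (G : SimpleGraph V)
    (hHelly : IsHellyGraph G) (φ : Γ →* Equiv.Perm V)
    (hφ : ∀ γ : Γ, IsGraphAut G (φ γ)) :
    ((∃ σ : Set V, IsRoundClique G σ ∧ ∀ γ : Γ, (φ γ) '' σ = σ) ↔
      (∃ f ∈ InjHull G, ∀ γ : Γ, hullAct (φ γ) f = f)) ∧
    ((∃ f ∈ InjHull G, ∀ γ : Γ, hullAct (φ γ) f = f) ↔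
      (∃ (x : V) (R : ℝ), ∀ γ : Γ, (G.dist x (φ γ x) : ℝ) ≤ R)) := by
  have : Nonempty V := hHelly.1.nonempty
  have fixed_of_bounded : (∃ (x : V) (R : ℝ), ∀ γ : Γ, (G.dist x (φ γ x) : ℝ) ≤ R) →
      ∃ f ∈ InjHull G, ∀ γ : Γ, hullAct (φ γ) f = f := fun ⟨_, _, hR⟩ =>
    exists_mem_injHull_hullAct_eq φ hHelly.1 hφ hR
  refine ⟨⟨fun ⟨σ, hσ, hφσ⟩ => fixed_of_bounded (hσ.exists_dist_apply_le φ hφσ), ?_⟩,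
    fun ⟨f, hf, hfix⟩ => exists_dist_apply_le_of_hullAct_eq φ hf hfix, fixed_of_bounded⟩
  rintro ⟨f, hf, hfix⟩
  exact ⟨phi G f, hHelly.isRoundClique_phi hf,
    fun γ => (hφ γ).image_phi (hullAct_eq_self_iff.1 (hfix γ))⟩

end HellyPaper
end

section
/- Let X be a Helly graph and let A ⊆ X be a round clique with at least two vertices. Define f_A : X → ℝ by: f_A(x) = 1/2 if x ∈ A; and for x ∉ A, letting D = min_{a∈A} d(x,a), set f_A(x) = D if A ⊆ B(x,D) and f_A(x) = D + 1/2 otherwise. Then f_A belongs to the injective hull E(X), i.e. f_A(x)+f_A(y) ≥ d(x,y) for all x,y ∈ X and f_A(x) = sup_{y∈X}(d(x,y) − f_A(y)) for all x ∈ X. -/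
namespace HellyPaper

open SimpleGraph

section

variable {V : Type*} {G : SimpleGraph V}

lemma mem_ball {x y : V} {r : ℕ} : y ∈ ball G x r ↔ G.dist x y ≤ r := Iff.rfl

lemma ball_zero (hG : G.Connected) (x : V) : ball G x 0 = {x} := by
  ext y
  simp [mem_ball, hG.dist_eq_zero_iff, eq_comm]

lemma ball_inter_ball_nonempty_iff (hG : G.Connected) {u v : V} {r s : ℕ} :
    (ball G u r ∩ ball G v s).Nonempty ↔ G.dist u v ≤ r + s := by
  constructor
  · rintro ⟨w, hu, hv⟩
    calc G.dist u v ≤ G.dist u w + G.dist w v := hG.dist_triangle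
      _ ≤ r + s := add_le_add hu (dist_comm.trans_le hv)
  · intro h
    obtain ⟨p, hp⟩ := hG.exists_walk_length_eq_dist u v
    refine ⟨p.getVert r, ?_, ?_⟩
    · have := dist_le (p.take r)
      rw [Walk.take_length] at this
      exact this.trans inf_le_left
    · have := dist_le (p.drop r)
      rw [Walk.drop_length] at this
      rw [mem_ball, dist_comm]
      omega

theorem _root_.SimpleGraph.IsClique.dist_le_one_s5 {A : Set V} (hA : G.IsClique A) {a b : V}
    (ha : a ∈ A) (hb : b ∈ A) : G.dist a b ≤ 1 := by
  rcases eq_or_ne a b with rfl | hab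
  · simp
  · exact (dist_eq_one_iff_adj.2 (hA ha hb hab)).le

namespace IsHellyGraph

lemma iInter_ball_nonempty (hG : IsHellyGraph G) {S : Set (V × ℕ)}
    (hS : ∀ p ∈ S, ∀ q ∈ S, G.dist p.1 q.1 ≤ p.2 + q.2) :
    (⋂ p ∈ S, ball G p.1 p.2).Nonempty :=
  hG.2 S fun p hp q hq => (ball_inter_ball_nonempty_iff hG.1).2 (hS p hp q hq)

lemma exists_lt_dist_of_disjoint (hG : IsHellyGraph G) {S : Set (V × ℕ)}
    (hS : (⋂ p ∈ S, ball G p.1 p.2).Nonempty) {x : V} {k : ℕ}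
    (hx : Disjoint (ball G x k) (⋂ p ∈ S, ball G p.1 p.2)) :
    ∃ p ∈ S, p.2 + k < G.dist p.1 x := by
  by_contra! hfar
  obtain ⟨a, ha⟩ := hS
  rw [Set.mem_iInter₂] at ha
  have hmeet : ∀ p ∈ insert (x, k) S, ∀ q ∈ insert (x, k) S, G.dist p.1 q.1 ≤ p.2 + q.2 := by
    simp only [Set.forall_mem_insert]
    refine ⟨⟨by simp, fun q hq => ?_⟩, fun p hp => ⟨hfar p hp, fun q hq => ?_⟩⟩
    · rw [dist_comm, add_comm]
      exact hfar q hq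
    · exact (ball_inter_ball_nonempty_iff hG.1).1 ⟨a, ha p hp, ha q hq⟩
  obtain ⟨w, hw⟩ := hG.iInter_ball_nonempty hmeet
  rw [Set.biInter_insert] at hw
  exact Set.disjoint_left.1 hx hw.1 hw.2

end IsHellyGraph

variable {A : Set V} {x y : V}

noncomputable def infDist (G : SimpleGraph V) (A : Set V) (x : V) : ℕ :=
  sInf ((fun a => G.dist x a) '' A)

lemma isLeast_infDist (hA : A.Nonempty) (x : V) :
    IsLeast ((fun a => G.dist x a) '' A) (infDist G A x) :=
  ⟨Nat.sInf_mem (hA.image _), fun _ hn => Nat.sInf_le hn⟩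

lemma infDist_le_dist {a : V} (ha : a ∈ A) : infDist G A x ≤ G.dist x a :=
  Nat.sInf_le ⟨a, ha, rfl⟩

lemma exists_dist_eq_infDist (hA : A.Nonempty) (x : V) : ∃ a ∈ A, G.dist x a = infDist G A x :=
  (isLeast_infDist hA x).1

lemma infDist_of_mem (hx : x ∈ A) : infDist G A x = 0 :=
  Nat.eq_zero_of_le_zero (by simpa using infDist_le_dist (G := G) (x := x) hx)

lemma dist_le_infDist_add_one (hG : G.Connected) (hA : G.IsClique A) (hAne : A.Nonempty)
    {a : V} (ha : a ∈ A) : G.dist x a ≤ infDist G A x + 1 := by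
  obtain ⟨b, hb, hxb⟩ := exists_dist_eq_infDist hAne x
  calc G.dist x a ≤ G.dist x b + G.dist b a := hG.dist_triangle
    _ ≤ infDist G A x + 1 := add_le_add hxb.le (hA.dist_le_one_s5 hb ha)

lemma dist_le_infDist_add_infDist (hG : G.Connected) (hA : A.Nonempty)
    (hx : A ⊆ ball G x (infDist G A x)) (y : V) :
    G.dist x y ≤ infDist G A x + infDist G A y := by
  obtain ⟨b, hb, hyb⟩ := exists_dist_eq_infDist hA y
  calc G.dist x y ≤ G.dist x b + G.dist b y := hG.dist_triangle
    _ ≤ infDist G A x + infDist G A y := add_le_add (hx hb) (by rw [dist_comm, hyb])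

lemma dist_le_infDist_add_infDist_add_one (hG : G.Connected) (hA : G.IsClique A)
    (hAne : A.Nonempty) (x y : V) : G.dist x y ≤ infDist G A x + infDist G A y + 1 := by
  obtain ⟨b, hb, hyb⟩ := exists_dist_eq_infDist hAne y
  calc G.dist x y ≤ G.dist x b + G.dist b y := hG.dist_triangle
    _ ≤ infDist G A x + 1 + infDist G A y :=
      add_le_add (dist_le_infDist_add_one hG hA hAne hb) (by rw [dist_comm, hyb])
    _ = infDist G A x + infDist G A y + 1 := by ring

lemma exists_dist_eq_infDist_add_one (hG : G.Connected) (hA : G.IsClique A) (hAne : A.Nonempty)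
    (hx : ¬ A ⊆ ball G x (infDist G A x)) : ∃ a ∈ A, G.dist x a = infDist G A x + 1 := by
  obtain ⟨a, ha, hxa⟩ := Set.not_subset.1 hx
  exact ⟨a, ha, le_antisymm (dist_le_infDist_add_one hG hA hAne ha) (Nat.lt_of_not_le hxa)⟩

lemma one_le_of_subset_ball (hG : G.Connected) (hA : A.Nontrivial) {z : V} {r : ℕ}
    (hz : A ⊆ ball G z r) : 1 ≤ r := by
  by_contra! h
  rw [Nat.lt_one_iff.1 h, ball_zero hG] at hz
  exact hA.not_subset_singleton hz

lemma exists_subset_ball_add_le_dist (hG : IsHellyGraph G) (hAne : A.Nonempty)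
    {S : Set (V × ℕ)} (hS : A = ⋂ p ∈ S, ball G p.1 p.2) (hD : 1 ≤ infDist G A x) :
    ∃ z r, A ⊆ ball G z r ∧ r + infDist G A x ≤ G.dist z x := by
  have hdisj : Disjoint (ball G x (infDist G A x - 1)) (⋂ p ∈ S, ball G p.1 p.2) := by
    rw [← hS]
    refine Set.disjoint_left.2 fun w (hw : G.dist x w ≤ infDist G A x - 1) hwA => ?_
    have := infDist_le_dist (G := G) (x := x) hwA
    omega
  obtain ⟨⟨z, r⟩, hzS, hzx⟩ := hG.exists_lt_dist_of_disjoint (hS ▸ hAne) hdisj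
  exact ⟨z, r, hS ▸ Set.biInter_subset_of_mem hzS, by dsimp only at hzx; omega⟩

lemma exists_dist_eq_one_of_subset_ball (hG : IsHellyGraph G) (hA : IsRoundClique G A)
    (hA2 : A.Nontrivial) (hx : A ⊆ ball G x (infDist G A x)) :
    ∃ y, G.dist x y = infDist G A x + 1 ∧ ∀ a ∈ A, G.dist y a = 1 := by
  obtain ⟨hAne, hclique, S, hSA⟩ := hA
  set D := infDist G A x
  obtain ⟨z, r, hAz, hzx⟩ :=
    exists_subset_ball_add_le_dist hG hAne hSA (one_le_of_subset_ball hG.1 hA2 hx)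
  have hr := one_le_of_subset_ball hG.1 hA2 hAz
  set R := G.dist z x - (D + 1)
  obtain ⟨y, hy⟩ := hG.iInter_ball_nonempty
    (S := insert (x, D + 1) (insert (z, R) ((fun a => (a, 1)) '' A))) (by
      have hzx' : G.dist x z = G.dist z x := dist_comm
      simp only [Set.forall_mem_insert, Set.forall_mem_image]
      refine ⟨⟨by simp, by omega, fun a ha => ?_⟩, ⟨by omega, by simp, fun a ha => ?_⟩,
        fun a ha => ⟨?_, ?_, fun b hb => ?_⟩⟩
      · exact (mem_ball.1 (hx ha)).trans (by omega)
      · exact (mem_ball.1 (hAz ha)).trans (by omega)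
      · rw [dist_comm]
        exact (mem_ball.1 (hx ha)).trans (by omega)
      · rw [dist_comm]
        exact (mem_ball.1 (hAz ha)).trans (by omega)
      · exact (hclique.dist_le_one_s5 ha hb).trans (by omega))
  simp only [Set.mem_iInter₂, Set.forall_mem_insert, Set.forall_mem_image, mem_ball] at hy
  obtain ⟨hxy, hzy, hAy⟩ := hy
  have hxy' : G.dist x y = D + 1 := by
    have := hG.1.dist_triangle (u := z) (v := y) (w := x)
    rw [dist_comm (u := y)] at this
    omega
  refine ⟨y, hxy', fun a ha => ?_⟩
  have := hG.1.dist_triangle (u := x) (v := a) (w := y)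
  have := mem_ball.1 (hx ha)
  have := hAy ha
  rw [dist_comm]
  omega

open scoped Classical in
noncomputable def cliqueFun (G : SimpleGraph V) (A : Set V) (x : V) : ℝ :=
  if A ⊆ ball G x (infDist G A x) then infDist G A x else infDist G A x + 1 / 2

lemma cliqueFun_of_subset (hx : A ⊆ ball G x (infDist G A x)) :
    cliqueFun G A x = infDist G A x :=
  if_pos hx

lemma cliqueFun_of_not_subset (hx : ¬ A ⊆ ball G x (infDist G A x)) :
    cliqueFun G A x = infDist G A x + 1 / 2 :=
  if_neg hx

lemma infDist_le_cliqueFun (x : V) : (infDist G A x : ℝ) ≤ cliqueFun G A x := by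
  unfold cliqueFun
  split_ifs <;> linarith

lemma cliqueFun_of_mem (hG : G.Connected) (hA : A.Nontrivial) (hx : x ∈ A) :
    cliqueFun G A x = 1 / 2 := by
  have hD := infDist_of_mem (G := G) hx
  rw [cliqueFun_of_not_subset (by rw [hD, ball_zero hG]; exact hA.not_subset_singleton), hD]
  simp

lemma cliqueFun_eq_one (hA : A.Nonempty) (hy : ∀ a ∈ A, G.dist y a = 1) :
    cliqueFun G A y = 1 := by
  obtain ⟨a, ha, hya⟩ := exists_dist_eq_infDist hA y
  have hD : infDist G A y = 1 := hya ▸ hy a ha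
  rw [cliqueFun_of_subset fun b hb => by rw [mem_ball, hD, hy b hb], hD]
  simp

lemma eq_cliqueFun (hG : G.Connected) (hA : A.Nontrivial) {f : V → ℝ}
    (hf1 : ∀ x ∈ A, f x = 1 / 2)
    (hf2 : ∀ x ∉ A, ∀ D : ℕ, IsLeast ((fun a => G.dist x a) '' A) D →
      (A ⊆ ball G x D → f x = (D : ℝ)) ∧ (¬ A ⊆ ball G x D → f x = (D : ℝ) + 1 / 2)) :
    f = cliqueFun G A := by
  funext x
  by_cases hx : x ∈ A
  · rw [hf1 x hx, cliqueFun_of_mem hG hA hx]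
  · have hfx := hf2 x hx _ (isLeast_infDist hA.nonempty x)
    unfold cliqueFun
    split_ifs with h
    exacts [hfx.1 h, hfx.2 h]

lemma dist_le_cliqueFun_add_cliqueFun (hG : G.Connected) (hA : G.IsClique A) (hAne : A.Nonempty)
    (x y : V) : (G.dist x y : ℝ) ≤ cliqueFun G A x + cliqueFun G A y := by
  have hx := infDist_le_cliqueFun (G := G) (A := A) x
  have hy := infDist_le_cliqueFun (G := G) (A := A) y
  by_cases hsx : A ⊆ ball G x (infDist G A x)
  · have : (G.dist x y : ℝ) ≤ infDist G A x + infDist G A y := by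
      exact_mod_cast dist_le_infDist_add_infDist hG hAne hsx y
    linarith
  by_cases hsy : A ⊆ ball G y (infDist G A y)
  · have : (G.dist x y : ℝ) ≤ infDist G A y + infDist G A x := by
      exact_mod_cast dist_comm (G := G) ▸ dist_le_infDist_add_infDist hG hAne hsy x
    linarith
  have : (G.dist x y : ℝ) ≤ infDist G A x + infDist G A y + 1 := by
    exact_mod_cast dist_le_infDist_add_infDist_add_one hG hA hAne x y
  rw [cliqueFun_of_not_subset hsx, cliqueFun_of_not_subset hsy]
  linarith

lemma exists_dist_eq_cliqueFun_add_cliqueFun (hG : IsHellyGraph G) (hA : IsRoundClique G A)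
    (hA2 : A.Nontrivial) (x : V) :
    ∃ y, (G.dist x y : ℝ) = cliqueFun G A x + cliqueFun G A y := by
  by_cases hx : A ⊆ ball G x (infDist G A x)
  · obtain ⟨y, hxy, hyA⟩ := exists_dist_eq_one_of_subset_ball hG hA hA2 hx
    refine ⟨y, ?_⟩
    rw [cliqueFun_of_subset hx, cliqueFun_eq_one hA.1 hyA, hxy]
    push_cast
    ring
  · obtain ⟨a, ha, hxa⟩ := exists_dist_eq_infDist_add_one hG.1 hA.2.1 hA.1 hx
    refine ⟨a, ?_⟩
    rw [cliqueFun_of_not_subset hx, cliqueFun_of_mem hG.1 hA2 ha, hxa]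
    push_cast
    ring

lemma mem_injHull_of_le_of_exists_eq {f : V → ℝ} (hle : ∀ x y, (G.dist x y : ℝ) ≤ f x + f y)
    (heq : ∀ x, ∃ y, (G.dist x y : ℝ) = f x + f y) : f ∈ InjHull G := by
  refine ⟨hle, fun x => ⟨?_, fun c hc => ?_⟩⟩
  · rintro _ ⟨y, rfl⟩
    linarith [hle x y]
  · obtain ⟨y, hy⟩ := heq x
    linarith [hc ⟨y, rfl⟩]

end

/-- For a round clique A with at least two vertices, the function f_A (equal to
1/2 on A, and to D or D+1/2 off A according to whether A ⊆ B(x,D), where D is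
the minimal distance from x to A) belongs to the injective hull E(X). -/
theorem stmt5 {V : Type*} (G : SimpleGraph V) (hHelly : IsHellyGraph G)
    (A : Set V) (hA : IsRoundClique G A)
    (hA2 : ∃ a ∈ A, ∃ b ∈ A, a ≠ b)
    (f : V → ℝ)
    (hf1 : ∀ x ∈ A, f x = 1 / 2)
    (hf2 : ∀ x ∉ A, ∀ D : ℕ, IsLeast ((fun a => G.dist x a) '' A) D →
      (A ⊆ ball G x D → f x = (D : ℝ)) ∧
      (¬ A ⊆ ball G x D → f x = (D : ℝ) + 1 / 2)) :
    f ∈ InjHull G := by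
  obtain rfl := eq_cliqueFun hHelly.1 hA2 hf1 hf2
  exact mem_injHull_of_le_of_exists_eq (dist_le_cliqueFun_add_cliqueFun hHelly.1 hA.2.1 hA.1)
    (exists_dist_eq_cliqueFun_add_cliqueFun hHelly hA hA2)

end HellyPaper
end
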